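/- arXiv:quant-ph/9908033 — 7 statements merged into one kernel-verified Lean document; each statement's English description precedes it below -/
import Mathlib

section
/- Let H be a complex Hilbert space and let Q, P : H →ₗ.[ℂ] H be linear partial maps with Q symmetric. Suppose φ ∈ Q.domain ∩ P.domain, P φ ∈ Q.domain, Q φ ∈ P.domain, the canonical commutation relation Q (P φ) − P (Q φ) = Complex.I • φ holds at φ, and Q φ = a • φ for some real number a. Then φ = 0. (Eigenvectors of either member of a canonical pair do not belong to the canonical domain.) -/
open scoped ComplexInnerProductSpace InnerProductSpace

/-!
Pair the commutation relation with `φ`. Since `Q` is symmetric and its eigenvalue `a` is real,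
`⟪φ, Q (P φ)⟫ = ⟪Q φ, P φ⟫ = a ⟪φ, P φ⟫`, while linearity of `P` gives `⟪φ, P (Q φ)⟫ = a ⟪φ, P φ⟫`.
Hence `0 = ⟪φ, [Q, P] φ⟫ = i ‖φ‖²`.
-/

namespace LinearPMap

variable {𝕜 E : Type*} [RCLike 𝕜] [NormedAddCommGroup E] [InnerProductSpace 𝕜 E]

theorem apply_eq_smul_apply_of_eq_smul (P : E →ₗ.[𝕜] E) {x y : E} {c : 𝕜}
    (hx : x ∈ P.domain) (hy : y ∈ P.domain) (hyx : y = c • x) :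
    P ⟨y, hy⟩ = c • P ⟨x, hx⟩ := by
  subst hyx
  exact P.map_smul c ⟨x, hx⟩

theorem IsFormalAdjoint.inner_apply_eq_of_apply_eq_smul {Q : E →ₗ.[𝕜] E}
    (hQ : Q.IsFormalAdjoint Q) {x : Q.domain} {a : ℝ} (hx : Q x = (a : 𝕜) • (x : E))
    (y : Q.domain) :
    ⟪(x : E), Q y⟫_𝕜 = a * ⟪(x : E), y⟫_𝕜 := by
  rw [← hQ x y, hx, inner_smul_left, RCLike.conj_ofReal]

theorem IsFormalAdjoint.inner_commutator_eq_zero_of_apply_eq_smul {Q P : E →ₗ.[𝕜] E}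
    (hQ : Q.IsFormalAdjoint Q) {φ : E} (hφQ : φ ∈ Q.domain) (hφP : φ ∈ P.domain)
    (hPφ : P ⟨φ, hφP⟩ ∈ Q.domain) (hQφ : Q ⟨φ, hφQ⟩ ∈ P.domain)
    {a : ℝ} (hEig : Q ⟨φ, hφQ⟩ = (a : 𝕜) • φ) :
    ⟪φ, Q ⟨P ⟨φ, hφP⟩, hPφ⟩ - P ⟨Q ⟨φ, hφQ⟩, hQφ⟩⟫_𝕜 = 0 := by
  rw [inner_sub_right, hQ.inner_apply_eq_of_apply_eq_smul (x := ⟨φ, hφQ⟩) hEig,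
    P.apply_eq_smul_apply_of_eq_smul hφP hQφ hEig, inner_smul_right, sub_self]

end LinearPMap

theorem eigenvector_not_in_canonical_domain_general
    {H : Type*} [NormedAddCommGroup H] [InnerProductSpace ℂ H]
    (Q P : H →ₗ.[ℂ] H)
    (hQ : ∀ x y : Q.domain, ⟪Q x, (y : H)⟫ = ⟪(x : H), Q y⟫)
    (φ : H) (hφQ : φ ∈ Q.domain) (hφP : φ ∈ P.domain)
    (hPφ : P ⟨φ, hφP⟩ ∈ Q.domain) (hQφ : Q ⟨φ, hφQ⟩ ∈ P.domain)
    (hccr : Q ⟨P ⟨φ, hφP⟩, hPφ⟩ - P ⟨Q ⟨φ, hφQ⟩, hQφ⟩ = Complex.I • φ)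
    (a : ℝ) (hEig : Q ⟨φ, hφQ⟩ = (a : ℂ) • φ) :
    φ = 0 := by
  have hzero := LinearPMap.IsFormalAdjoint.inner_commutator_eq_zero_of_apply_eq_smul
    (P := P) hQ hφQ hφP hPφ hQφ hEig
  rw [hccr, inner_smul_right, mul_eq_zero] at hzero
  exact inner_self_eq_zero.mp (hzero.resolve_left Complex.I_ne_zero)

theorem eigenvector_not_in_canonical_domain
    {H : Type*} [NormedAddCommGroup H] [InnerProductSpace ℂ H] [CompleteSpace H]
    (Q P : H →ₗ.[ℂ] H)
    (hQ : ∀ x y : Q.domain, ⟪Q x, (y : H)⟫ = ⟪(x : H), Q y⟫)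
    (φ : H) (hφQ : φ ∈ Q.domain) (hφP : φ ∈ P.domain)
    (hPφ : P ⟨φ, hφP⟩ ∈ Q.domain) (hQφ : Q ⟨φ, hφQ⟩ ∈ P.domain)
    (hccr : Q ⟨P ⟨φ, hφP⟩, hPφ⟩ - P ⟨Q ⟨φ, hφQ⟩, hQφ⟩ = Complex.I • φ)
    (a : ℝ) (hEig : Q ⟨φ, hφQ⟩ = (a : ℂ) • φ) :
    φ = 0 :=
  eigenvector_not_in_canonical_domain_general Q P hQ φ hφQ hφP hPφ hQφ hccr a hEig
end

section
/- Let H be a complex Hilbert space and let Q, P : H →L[ℂ] H be self-adjoint continuous linear maps (IsSelfAdjoint Q and IsSelfAdjoint P). Let D be a submodule of H such that Q maps D into D and Q (P φ) − P (Q φ) = Complex.I • φ for all φ ∈ D. Then D = ⊥. (A canonical pair whose canonical domain is invariant under one member cannot consist of two bounded, everywhere-defined operators.) -/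
/-!
Since `Q` is self-adjoint and leaves `D`, hence its closure `K`, invariant, it also leaves `Kᗮ`
invariant and so commutes with the orthogonal projection `p` onto `K`; by continuity the
commutation relation holds on `K`. Then `q = Q p` and `r = p P p` satisfy `q r - r q = i p` in
the corner `p B(H) p`, whose unit is `p`, and Wielandt's argument runs there:
`q ^ (n + 1) r - r q ^ (n + 1) = (n + 1) i q ^ n p` forces
`(n + 1) ‖q ^ n p‖ ≤ 2 ‖q‖ ‖r‖ ‖q ^ n p‖`, so `q ^ n p = 0` for large `n`, and descending in `n`
gives `p = 0`.
-/

section Commutator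

variable {R A : Type*} [CommSemiring R] [Ring A] [Algebra R A] {p q r : A} {c : R}

theorem commutator_pow_succ_eq_smul (hqp : q * p = q) (hpq : p * q = q)
    (h : q * r - r * q = c • p) (n : ℕ) :
    q ^ (n + 1) * r - r * q ^ (n + 1) = ((n + 1 : R) * c) • (q ^ n * p) := by
  have pow_succ_mul : ∀ m, q ^ (m + 1) * p = q ^ (m + 1) := fun m => by
    rw [pow_succ, mul_assoc, hqp]
  induction n with
  | zero => simpa using h
  | succ n ih =>
    have split : q ^ (n + 2) * r - r * q ^ (n + 2)
        = q * (q ^ (n + 1) * r - r * q ^ (n + 1)) + (q * r - r * q) * q ^ (n + 1) := by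
      rw [pow_succ' q (n + 1)]; noncomm_ring
    have hp_pow : p * q ^ (n + 1) = q ^ (n + 1) := by
      rw [pow_succ', ← mul_assoc, hpq]
    rw [split, ih, h, mul_smul_comm, smul_mul_assoc, ← mul_assoc, ← pow_succ', hp_pow,
      pow_succ_mul, ← add_smul]
    congr 1
    push_cast
    ring

theorem IsIdempotentElem.commutator_compress_eq_smul {S T : A} (hp : IsIdempotentElem p)
    (hT : Commute p T) (h : (T * S - S * T) * p = c • p) :
    (T * p) * (p * S * p) - (p * S * p) * (T * p) = c • p := by
  calc (T * p) * (p * S * p) - (p * S * p) * (T * p)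
      = p * ((T * S - S * T) * p) := by
        have left : T * p * (p * S * p) = p * (T * S * p) := by
          rw [show T * p * (p * S * p) = T * (p * p) * S * p by noncomm_ring, hp.eq, ← hT.eq]
          noncomm_ring
        have right : p * S * p * (T * p) = p * (S * T * p) := by
          rw [show p * S * p * (T * p) = p * S * (p * T) * p by noncomm_ring, hT.eq,
            show p * S * (T * p) * p = p * S * T * (p * p) by noncomm_ring, hp.eq]
          noncomm_ring
        rw [left, right, ← mul_sub, ← sub_mul]
    _ = c • p := by rw [h, mul_smul_comm, hp.eq]

end Commutator

section Wielandt

variable {𝕜 A : Type*} [RCLike 𝕜] [NormedRing A] [NormedAlgebra 𝕜 A] {p q r : A} {c : 𝕜}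

theorem eq_zero_of_commutator_eq_smul (hc : c ≠ 0) (hqp : q * p = q) (hpq : p * q = q)
    (h : q * r - r * q = c • p) : p = 0 := by
  have commutator_pow := commutator_pow_succ_eq_smul hqp hpq h
  have pow_succ_eq : ∀ n, q ^ (n + 1) = q * (q ^ n * p) := fun n => by
    rw [← mul_assoc, ← pow_succ', pow_succ, mul_assoc, hqp]
  have bound : ∀ n : ℕ, (n + 1) * ‖c‖ * ‖q ^ n * p‖ ≤ 2 * ‖q‖ * ‖r‖ * ‖q ^ n * p‖ := by
    intro n
    have hpow : ‖q ^ (n + 1)‖ ≤ ‖q‖ * ‖q ^ n * p‖ := pow_succ_eq n ▸ norm_mul_le _ _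
    calc (n + 1) * ‖c‖ * ‖q ^ n * p‖ = ‖q ^ (n + 1) * r - r * q ^ (n + 1)‖ := by
          have hn : ‖(n + 1 : 𝕜)‖ = n + 1 := by
            exact_mod_cast RCLike.norm_natCast (K := 𝕜) (n + 1)
          rw [commutator_pow, norm_smul, norm_mul (n + 1 : 𝕜) c, hn]
      _ ≤ ‖q ^ (n + 1)‖ * ‖r‖ + ‖r‖ * ‖q ^ (n + 1)‖ :=
          (norm_sub_le _ _).trans (add_le_add (norm_mul_le _ _) (norm_mul_le _ _))
      _ ≤ 2 * ‖q‖ * ‖r‖ * ‖q ^ n * p‖ := by nlinarith [norm_nonneg r]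
  obtain ⟨N, hN⟩ := exists_nat_gt (2 * ‖q‖ * ‖r‖ / ‖c‖)
  have vanish : q ^ N * p = 0 := by
    by_contra hne
    have hc_pos : 0 < ‖c‖ := norm_pos_iff.2 hc
    have hN' : 2 * ‖q‖ * ‖r‖ < N * ‖c‖ := (div_lt_iff₀ hc_pos).1 hN
    have := le_of_mul_le_mul_right (bound N) (norm_pos_iff.2 hne)
    linarith
  have descend : ∀ n, q ^ (n + 1) * p = 0 → q ^ n * p = 0 := by
    intro n hn
    have hzero : q ^ (n + 1) = 0 := by rw [pow_succ_eq, ← mul_assoc, ← pow_succ', hn]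
    have := commutator_pow n
    rw [hzero, zero_mul, mul_zero, sub_zero, eq_comm, smul_eq_zero] at this
    exact this.resolve_left (mul_ne_zero (Nat.cast_add_one_ne_zero n) hc)
  have descend_all : ∀ n, q ^ n * p = 0 → p = 0 := fun n => by
    induction n with
    | zero => simp
    | succ n ih => exact fun hn => ih (descend n hn)
  exact descend_all N vanish

theorem IsIdempotentElem.eq_zero_of_commutator_mul_eq_smul {S T : A} (hc : c ≠ 0)
    (hp : IsIdempotentElem p) (hT : Commute p T) (h : (T * S - S * T) * p = c • p) : p = 0 :=
  eq_zero_of_commutator_eq_smul (q := T * p) (r := p * S * p) hc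
    (by rw [mul_assoc, hp.eq]) (by rw [← mul_assoc, hT.eq, mul_assoc, hp.eq])
    (hp.commutator_compress_eq_smul hT h)

end Wielandt

open Module.End ContinuousLinearMap

section Hilbert

variable {𝕜 E : Type*} [RCLike 𝕜] [NormedAddCommGroup E] [InnerProductSpace 𝕜 E] [CompleteSpace E]

theorem IsSelfAdjoint.commute_starProjection {T : E →L[𝕜] E} (hT : IsSelfAdjoint T)
    {K : Submodule 𝕜 E} [K.HasOrthogonalProjection] (hK : K ∈ invtSubmodule T) :
    Commute K.starProjection T := by
  refine (K.isIdempotentElem_starProjection.commute_iff).2 ⟨?_, ?_⟩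
  · rwa [Submodule.range_starProjection]
  · rw [Submodule.ker_starProjection]
    exact orthogonal_mem_invtSubmodule (by rwa [← isSelfAdjoint_iff'.1 hT] at hK)

theorem Submodule.mul_starProjection_topologicalClosure_eq {D : Submodule 𝕜 E}
    {f g : E →L[𝕜] E} (hfg : ∀ φ ∈ D, f φ = g φ) :
    f * D.topologicalClosure.starProjection = g * D.topologicalClosure.starProjection := by
  ext x
  exact Set.EqOn.closure hfg f.continuous g.continuous
    (D.topologicalClosure.starProjection_apply_mem x)

end Hilbert

theorem canonical_pair_invariant_domain_not_both_bounded_general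
    {H : Type*} [NormedAddCommGroup H] [InnerProductSpace ℂ H] [CompleteSpace H]
    (Q P : H →L[ℂ] H) (hQ : IsSelfAdjoint Q)
    (D : Submodule ℂ H)
    (hQD : ∀ φ ∈ D, Q φ ∈ D)
    (hccr : ∀ φ ∈ D, Q (P φ) - P (Q φ) = Complex.I • φ) :
    D = ⊥ := by
  set K := D.topologicalClosure
  have hK : K ∈ invtSubmodule Q :=
    D.topologicalClosure_mem_invtSubmodule ((mem_invtSubmodule_iff_forall_mem_of_mem _).2 hQD)
  have hccrK : (Q * P - P * Q) * K.starProjection = Complex.I • K.starProjection := by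
    simpa using D.mul_starProjection_topologicalClosure_eq (f := Q * P - P * Q)
      (g := Complex.I • 1) hccr
  have hp : K.starProjection = 0 :=
    K.isIdempotentElem_starProjection.eq_zero_of_commutator_mul_eq_smul Complex.I_ne_zero
      (hQ.commute_starProjection hK) hccrK
  refine eq_bot_iff.2 ?_
  calc D ≤ K := D.le_topologicalClosure
    _ = ⊥ := by
      rw [← K.range_starProjection, hp, toLinearMap_zero, LinearMap.range_zero]

theorem canonical_pair_invariant_domain_not_both_bounded
    {H : Type*} [NormedAddCommGroup H] [InnerProductSpace ℂ H] [CompleteSpace H]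
    (Q P : H →L[ℂ] H) (hQ : IsSelfAdjoint Q) (hP : IsSelfAdjoint P)
    (D : Submodule ℂ H)
    (hQD : ∀ φ ∈ D, Q φ ∈ D)
    (hccr : ∀ φ ∈ D, Q (P φ) - P (Q φ) = Complex.I • φ) :
    D = ⊥ :=
  canonical_pair_invariant_domain_not_both_bounded_general Q P hQ D hQD hccr
end

section
/- Define f : ℝ → ℂ by f q = Complex.I * q^2 − (2 * Real.sqrt 5)/15 − Complex.I/3, and for g : ℝ → ℂ define (P g) q = ∫ q' in (0:ℝ)..1, (3 * Real.sqrt 5 / 2) * (q + q') * g q' (interval integral). Then for every q : ℝ, q * (P f) q − (P (fun q' => q' * f q')) q = Complex.I * f q. (The multiplication operator Q and the integral operator P with kernel (3√5/2)(q+q') on L²[0,1] satisfy the canonical commutation relation (QP − PQ)φ = iφ on the one-dimensional subspace spanned by f, even though both operators are bounded, everywhere defined and self-adjoint.) -/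
/-!
Both operators are explicit enough to compute: because the kernel of `P` is `κ (q + q')`, the
mixed terms cancel in `Q P - P Q`, which acts on `g` as `κ (q² ∫ g - ∫ q'² g)`. For `g = f` the
two moments are `∫ f = -2√5/15` and `∫ q'² f = 4i/45 - 2√5/45`, and `κ = 3√5/2` is chosen so
that `κ · 2√5/15 = 1`; the result is `-q² + 1/3 - (2√5/15) i = i f(q)`.
-/

/-- The function spanning the one-dimensional canonical domain. -/
noncomputable def fvec (q : ℝ) : ℂ :=
  Complex.I * (q : ℂ) ^ 2 - ((2 * Real.sqrt 5) / 15 : ℝ) - Complex.I / 3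

/-- The integral operator with kernel `(3√5/2)(q + q')` on `L²[0,1]`. -/
noncomputable def Pop (g : ℝ → ℂ) (q : ℝ) : ℂ :=
  ∫ q' in (0:ℝ)..1, ((3 * Real.sqrt 5 / 2 : ℝ) : ℂ) * ((q : ℂ) + (q' : ℂ)) * g q'

open intervalIntegral

theorem integral_add_kernel_commutator {a b : ℝ} {g : ℝ → ℂ}
    (hg : IntervalIntegrable g MeasureTheory.volume a b) (κ : ℂ) (q : ℝ) :
    (q : ℂ) * (∫ x in a..b, κ * ((q : ℂ) + x) * g x)
      - ∫ x in a..b, κ * ((q : ℂ) + x) * ((x : ℂ) * g x)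
      = κ * ((q : ℂ) ^ 2 * (∫ x in a..b, g x) - ∫ x in a..b, (x : ℂ) ^ 2 * g x) := by
  rw [← integral_const_mul, ← integral_sub, ← integral_const_mul ((q : ℂ) ^ 2), ← integral_sub,
    ← integral_const_mul κ]
  · exact integral_congr fun x _ => by ring
  · exact hg.const_mul _
  · exact hg.continuousOn_mul (by fun_prop)
  · simpa only [mul_assoc] using
      hg.continuousOn_mul (g := fun x : ℝ => (q : ℂ) * (κ * ((q : ℂ) + x))) (by fun_prop)
  · simpa only [mul_assoc] using
      hg.continuousOn_mul (g := fun x : ℝ => κ * ((q : ℂ) + x) * x) (by fun_prop)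

theorem integral_ofReal_pow (n : ℕ) : (∫ x in (0:ℝ)..1, (x : ℂ) ^ n) = 1 / (n + 1) := by
  simpa using intervalIntegral.integral_ofReal (f := fun x : ℝ => x ^ n) (a := 0) (b := 1)
    (μ := MeasureTheory.volume)

theorem integral_pow_mul_fvec (k : ℕ) :
    (∫ x in (0:ℝ)..1, (x : ℂ) ^ k * fvec x)
      = Complex.I / (k + 3) - (((2 * Real.sqrt 5) / 15 : ℝ) + Complex.I / 3) / (k + 1) := by
  have hpoly : ∀ x : ℝ, (x : ℂ) ^ k * fvec x = Complex.I * (x : ℂ) ^ (k + 2)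
      - (((2 * Real.sqrt 5) / 15 : ℝ) + Complex.I / 3) * (x : ℂ) ^ k := by
    intro x
    unfold fvec
    ring
  simp_rw [hpoly]
  rw [integral_sub, integral_const_mul, integral_const_mul, integral_ofReal_pow,
    integral_ofReal_pow]
  · push_cast
    ring
  all_goals exact Continuous.intervalIntegrable (by fun_prop) _ _

theorem bounded_selfadjoint_pair_ccr_on_closed_subspace :
    ∀ q : ℝ,
      (q : ℂ) * Pop fvec q - Pop (fun q' => (q' : ℂ) * fvec q') q
        = Complex.I * fvec q := by
  intro q
  have hf : IntervalIntegrable fvec MeasureTheory.volume 0 1 :=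
    Continuous.intervalIntegrable (by unfold fvec; fun_prop) _ _
  have hmoment0 := integral_pow_mul_fvec 0
  have hmoment2 := integral_pow_mul_fvec 2
  simp only [pow_zero, one_mul] at hmoment0
  have hsqrt : ((Real.sqrt 5 : ℝ) : ℂ) ^ 2 = 5 := by
    exact_mod_cast Real.sq_sqrt (by norm_num : (0 : ℝ) ≤ 5)
  rw [Pop, Pop, integral_add_kernel_commutator hf, hmoment0, hmoment2, fvec]
  push_cast
  linear_combination (1 / 15 - (q : ℂ) ^ 2 / 5) * hsqrt + (1 / 3 - (q : ℂ) ^ 2) * Complex.I_sq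
end

section
/- Let H be a complex Hilbert space, A : H →L[ℂ] H a continuous linear map, and B : H →ₗ.[ℂ] H a linear partial map. Let D be a submodule of H with D ≤ B.domain such that A maps D into D and A (B φ) − B (A φ) = Complex.I • φ for all φ ∈ D. Then for every natural number k ≥ 1 and every φ ∈ D: A^k φ ∈ D (so A^k φ ∈ B.domain), and A^k (B φ) − B (A^k φ) = (Complex.I * k) • (A^(k−1) φ). -/
/-! With `[A, B] = c` central, `[A ^ (k + 1), B] = A ^ k [A, B] + [A ^ k, B] A`,
so by induction `[A ^ (k + 1), B] = (k + 1) c A ^ k` on the `A`-invariant core `D`. -/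

namespace LinearPMap

variable {R M : Type*} [Ring R] [AddCommGroup M] [Module R M]
  {A : Module.End R M} {B : M →ₗ.[R] M} {D : Submodule R M} {c : R}

theorem pow_succ_apply_sub_apply_pow_succ (hD : D ≤ B.domain) (hAD : ∀ φ ∈ D, A φ ∈ D)
    (hcomm : ∀ φ (hφ : φ ∈ D), A (B ⟨φ, hD hφ⟩) - B ⟨A φ, hD (hAD φ hφ)⟩ = c • φ)
    (k : ℕ) {φ : M} (hφ : φ ∈ D) :
    (A ^ (k + 1)) (B ⟨φ, hD hφ⟩)
        - B ⟨(A ^ (k + 1)) φ, hD (Module.End.pow_apply_mem_of_forall_mem _ hAD φ hφ)⟩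
      = ((k + 1 : R) * c) • (A ^ k) φ := by
  induction k generalizing φ with
  | zero => simpa using hcomm φ hφ
  | succ k ih =>
    have hAφ := hAD φ hφ
    calc (A ^ (k + 1 + 1)) (B ⟨φ, hD hφ⟩)
          - B ⟨(A ^ (k + 1 + 1)) φ, hD (Module.End.pow_apply_mem_of_forall_mem _ hAD φ hφ)⟩
        = (A ^ (k + 1)) (B ⟨A φ, hD hAφ⟩ + c • φ)
            - B ⟨(A ^ (k + 1)) (A φ), hD (Module.End.pow_apply_mem_of_forall_mem _ hAD _ hAφ)⟩ := by
          rw [← hcomm φ hφ, add_sub_cancel]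
          simp only [pow_succ _ (k + 1), Module.End.mul_apply]
      _ = ((k + 1 : R) * c) • (A ^ k) (A φ) + c • (A ^ (k + 1)) φ := by
          rw [LinearMap.map_add, LinearMap.map_smul, ← ih hAφ]
          abel
      _ = (((k + 1 : ℕ) + 1 : R) * c) • (A ^ (k + 1)) φ := by
          rw [← Module.End.mul_apply, ← pow_succ, ← add_smul, ← add_one_mul, Nat.cast_succ]

end LinearPMap

theorem commutator_power_formula_general
    {H : Type*} [NormedAddCommGroup H] [InnerProductSpace ℂ H]
    (A : H →L[ℂ] H) (B : H →ₗ.[ℂ] H) (D : Submodule ℂ H) (hD : D ≤ B.domain)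
    (hAD : ∀ φ ∈ D, A φ ∈ D)
    (hccr : ∀ φ (hφ : φ ∈ D),
      A (B ⟨φ, hD hφ⟩) - B ⟨A φ, hD (hAD φ hφ)⟩ = Complex.I • φ) :
    ∀ k : ℕ, 1 ≤ k → ∀ φ (hφ : φ ∈ D), ∃ hk : (A ^ k) φ ∈ D,
      (A ^ k) (B ⟨φ, hD hφ⟩) - B ⟨(A ^ k) φ, hD hk⟩
        = (Complex.I * (k : ℂ)) • ((A ^ (k - 1)) φ) := by
  intro k hk φ hφ
  obtain ⟨n, rfl⟩ := Nat.exists_eq_add_of_le' hk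
  have hpow (m : ℕ) (x : H) : (A ^ m) x = ((A : Module.End ℂ H) ^ m) x :=
    LinearMap.congr_fun (A.toLinearMap_pow m) x
  have hmem : ((A : Module.End ℂ H) ^ (n + 1)) φ ∈ D :=
    Module.End.pow_apply_mem_of_forall_mem _ hAD φ hφ
  refine ⟨hpow _ _ ▸ hmem, ?_⟩
  have key := LinearPMap.pow_succ_apply_sub_apply_pow_succ hD hAD hccr n hφ
  simpa only [hpow, Nat.add_sub_cancel, Nat.cast_add, Nat.cast_one, mul_comm Complex.I] using key

theorem commutator_power_formula
    {H : Type*} [NormedAddCommGroup H] [InnerProductSpace ℂ H] [CompleteSpace H]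
    (A : H →L[ℂ] H) (B : H →ₗ.[ℂ] H) (D : Submodule ℂ H) (hD : D ≤ B.domain)
    (hAD : ∀ φ ∈ D, A φ ∈ D)
    (hccr : ∀ φ (hφ : φ ∈ D),
      A (B ⟨φ, hD hφ⟩) - B ⟨A φ, hD (hAD φ hφ)⟩ = Complex.I • φ) :
    ∀ k : ℕ, 1 ≤ k → ∀ φ (hφ : φ ∈ D), ∃ hk : (A ^ k) φ ∈ D,
      (A ^ k) (B ⟨φ, hD hφ⟩) - B ⟨(A ^ k) φ, hD hk⟩
        = (Complex.I * (k : ℂ)) • ((A ^ (k - 1)) φ) :=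
  commutator_power_formula_general A B D hD hAD hccr
end

section
/- Let H be a complex Hilbert space, Q : H →L[ℂ] H self-adjoint (IsSelfAdjoint Q), and P : H →ₗ.[ℂ] H a densely defined unbounded operator. Let D_c be a submodule of H contained in P.domain such that: (1) Q maps D_c into D_c; (2) Q (P φ) − P (Q φ) = Complex.I • φ for all φ ∈ D_c; (3) the graph {(φ, P φ) : φ ∈ D_c} is closed in H × H. Then for every β : ℝ and every φ ∈ D_c, the vector U_β φ belongs to D_c (in particular U_β φ ∈ P.domain), and U_β (P φ) − P (U_β φ) = (β : ℂ) • U_β φ, where U_β = exp (−(Complex.I * β) • Q). -/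
/-! The graph of `P` on `Dc` is a closed subspace of `H × H`, and the commutation relation says
exactly that it is invariant under `K (x, y) = (Q x, Q y - i x)`. Closedness makes it invariant
under `exp (c K)` as well. Since `K` is `Q × Q` plus the square-zero shear `(x, y) ↦ (0, -i x)`,
which commutes with `Q × Q`, with `U = exp (c Q)` we get `exp (c K) (x, y) = (U x, U y - i c U x)`;
for `c = -iβ` this is the claim. -/

/-- The unitary group element `U_β = exp(-(i β) Q)`. -/
noncomputable def Uop {H : Type*} [NormedAddCommGroup H] [InnerProductSpace ℂ H]
    [CompleteSpace H] (Q : H →L[ℂ] H) (β : ℝ) : H →L[ℂ] H :=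
  NormedSpace.exp ((-(Complex.I * (β : ℂ))) • Q)

open NormedSpace

theorem NormedSpace.exp_eq_one_add_of_mul_self_eq_zero (𝕂 : Type*) {𝔸 : Type*} [Field 𝕂]
    [CharZero 𝕂] [Ring 𝔸] [Algebra 𝕂 𝔸] [TopologicalSpace 𝔸] [IsTopologicalRing 𝔸] {N : 𝔸}
    (hN : N * N = 0) : exp N = 1 + N := by
  have hpow : ∀ n ∉ Finset.range 2, ((n.factorial : 𝕂))⁻¹ • N ^ n = 0 := by
    intro n hn
    obtain ⟨k, rfl⟩ := Nat.exists_eq_add_of_le (not_lt.mp (Finset.mem_range.not.mp hn))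
    rw [pow_add, pow_two, hN, zero_mul, smul_zero]
  rw [congrFun (exp_eq_tsum 𝕂) N, tsum_eq_sum hpow]
  simp [Finset.sum_range_succ]

namespace ContinuousLinearMap

variable {𝕜 E : Type*} [RCLike 𝕜] [NormedAddCommGroup E] [NormedSpace 𝕜 E]

variable (𝕜 E) in
noncomputable def prodMapSelfRingHom : (E →L[𝕜] E) →+* (E × E →L[𝕜] E × E) where
  toFun A := A.prodMap A
  map_one' := rfl
  map_mul' _ _ := rfl
  map_zero' := rfl
  map_add' _ _ := rfl

variable [CompleteSpace E]

theorem exp_apply_mem_of_mapsTo {S : Submodule 𝕜 E} (hS : IsClosed (S : Set E)) {A : E →L[𝕜] E}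
    (hA : Set.MapsTo A S S) {x : E} (hx : x ∈ S) : exp A x ∈ S := by
  have hpow : ∀ n : ℕ, (A ^ n) x ∈ S := fun n => by
    induction n with
    | zero => exact hx
    | succ n ih => rw [pow_succ']; exact hA ih
  have hsum := (apply 𝕜 E x).hasSum (exp_series_hasSum_exp' (𝕂 := 𝕜) A)
  exact hS.mem_of_tendsto hsum.tendsto_sum_nat (Filter.Eventually.of_forall fun n =>
    S.sum_mem fun i _ => S.smul_mem _ (hpow i))

theorem exp_prodMap_self (A : E →L[𝕜] E) : exp (A.prodMap A) = (exp A).prodMap (exp A) := by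
  let : NormedAlgebra ℚ (E →L[𝕜] E) := .restrictScalars ℚ 𝕜 _
  let : NormedAlgebra ℚ (E × E →L[𝕜] E × E) := .restrictScalars ℚ 𝕜 _
  exact (map_exp (prodMapSelfRingHom 𝕜 E)
    ((prodMapL 𝕜 E E E E).continuous.comp (continuous_id.prodMk continuous_id)) A).symm

theorem exp_prodMap_self_add_smul_inr_comp_fst (A : E →L[𝕜] E) (μ : 𝕜) (x y : E) :
    exp (A.prodMap A + μ • (inr 𝕜 E E).comp (fst 𝕜 E E)) (x, y)
      = (exp A x, exp A y + μ • exp A x) := by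
  set N := μ • (inr 𝕜 E E).comp (fst 𝕜 E E)
  have hcomm : Commute (A.prodMap A) N := by
    ext p <;> simp [N]
  have hN : N * N = 0 := by
    ext p <;> simp [N]
  let : NormedAlgebra ℚ (E × E →L[𝕜] E × E) := .restrictScalars ℚ 𝕜 _
  rw [exp_add_of_commute hcomm, exp_eq_one_add_of_mul_self_eq_zero 𝕜 hN, exp_prodMap_self]
  simp [N]

end ContinuousLinearMap

namespace LinearPMap

theorem mem_graph_domRestrict_iff {R E F : Type*} [Ring R] [AddCommGroup E] [Module R E]
    [AddCommGroup F] [Module R F] {f : E →ₗ.[R] F} {S : Submodule R E} (hS : S ≤ f.domain)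
    {x : E} {y : F} : (x, y) ∈ (f.domRestrict S).graph ↔ ∃ hx : x ∈ S, f ⟨x, hS hx⟩ = y := by
  rw [mem_graph_iff]
  constructor
  · rintro ⟨x', rfl, rfl⟩
    exact ⟨x'.2.1, (domRestrict_apply rfl).symm⟩
  · rintro ⟨hx, rfl⟩
    exact ⟨⟨x, hx, hS hx⟩, rfl, domRestrict_apply rfl⟩

theorem IsClosed.exp_smul_mem_graph {𝕜 E : Type*} [RCLike 𝕜] [NormedAddCommGroup E]
    [NormedSpace 𝕜 E] [CompleteSpace E] {T : E →ₗ.[𝕜] E} (hT : T.IsClosed) {A : E →L[𝕜] E}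
    {μ : 𝕜} (hA : ∀ p ∈ T.graph, (A p.1, A p.2 + μ • p.1) ∈ T.graph) (c : 𝕜) {p : E × E}
    (hp : p ∈ T.graph) :
    (exp (c • A) p.1, exp (c • A) p.2 + (c * μ) • exp (c • A) p.1) ∈ T.graph := by
  set K := (c • A).prodMap (c • A)
    + (c * μ) • (ContinuousLinearMap.inr 𝕜 E E).comp (ContinuousLinearMap.fst 𝕜 E E)
  have hK : Set.MapsTo K T.graph T.graph := fun q hq => by
    simpa [K, smul_add, mul_smul] using T.graph.smul_mem c (hA q hq)
  rw [← ContinuousLinearMap.exp_prodMap_self_add_smul_inr_comp_fst]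
  exact ContinuousLinearMap.exp_apply_mem_of_mapsTo hT hK hp

end LinearPMap

theorem unitary_commutation_on_canonical_domain_general
    {H : Type*} [NormedAddCommGroup H] [InnerProductSpace ℂ H] [CompleteSpace H]
    (Q : H →L[ℂ] H)
    (P : H →ₗ.[ℂ] H)
    (Dc : Submodule ℂ H) (hDc : Dc ≤ P.domain)
    (hQDc : ∀ φ ∈ Dc, Q φ ∈ Dc)
    (hccr : ∀ φ (hφ : φ ∈ Dc),
      Q (P ⟨φ, hDc hφ⟩) - P ⟨Q φ, hDc (hQDc φ hφ)⟩ = Complex.I • φ)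
    (hclosed : IsClosed {p : H × H | ∃ hp : p.1 ∈ Dc, P ⟨p.1, hDc hp⟩ = p.2}) :
    ∀ β : ℝ, ∀ φ (hφ : φ ∈ Dc), ∃ h : Uop Q β φ ∈ Dc,
      Uop Q β (P ⟨φ, hDc hφ⟩) - P ⟨Uop Q β φ, hDc h⟩
        = ((β : ℂ)) • (Uop Q β φ) := by
  intro β φ hφ
  have hT : (P.domRestrict Dc).IsClosed := by
    unfold LinearPMap.IsClosed
    convert hclosed using 1
    ext ⟨x, y⟩
    exact LinearPMap.mem_graph_domRestrict_iff hDc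
  have hK : ∀ p ∈ (P.domRestrict Dc).graph,
      (Q p.1, Q p.2 + (-Complex.I) • p.1) ∈ (P.domRestrict Dc).graph := by
    rintro ⟨x, y⟩ hp
    obtain ⟨hx, rfl⟩ := (LinearPMap.mem_graph_domRestrict_iff hDc).1 hp
    refine (LinearPMap.mem_graph_domRestrict_iff hDc).2 ⟨hQDc x hx, ?_⟩
    rw [neg_smul, ← hccr x hx]
    abel
  have hφP : (φ, P ⟨φ, hDc hφ⟩) ∈ (P.domRestrict Dc).graph :=
    (LinearPMap.mem_graph_domRestrict_iff hDc).2 ⟨hφ, rfl⟩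
  obtain ⟨hmem, heq⟩ := (LinearPMap.mem_graph_domRestrict_iff hDc).1
    (hT.exp_smul_mem_graph hK (-(Complex.I * β)) hφP)
  refine ⟨hmem, ?_⟩
  have hscalar : -(Complex.I * β) * -Complex.I = -β := by
    linear_combination (β : ℂ) * Complex.I_sq
  unfold Uop
  rw [heq, hscalar]
  module

theorem unitary_commutation_on_canonical_domain
    {H : Type*} [NormedAddCommGroup H] [InnerProductSpace ℂ H] [CompleteSpace H]
    (Q : H →L[ℂ] H) (hQ : IsSelfAdjoint Q)
    (P : H →ₗ.[ℂ] H) (hPdense : Dense (P.domain : Set H))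
    (Dc : Submodule ℂ H) (hDc : Dc ≤ P.domain)
    (hQDc : ∀ φ ∈ Dc, Q φ ∈ Dc)
    (hccr : ∀ φ (hφ : φ ∈ Dc),
      Q (P ⟨φ, hDc hφ⟩) - P ⟨Q φ, hDc (hQDc φ hφ)⟩ = Complex.I • φ)
    (hclosed : IsClosed {p : H × H | ∃ hp : p.1 ∈ Dc, P ⟨p.1, hDc hp⟩ = p.2}) :
    ∀ β : ℝ, ∀ φ (hφ : φ ∈ Dc), ∃ h : Uop Q β φ ∈ Dc,
      Uop Q β (P ⟨φ, hDc hφ⟩) - P ⟨Uop Q β φ, hDc h⟩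
        = ((β : ℂ)) • (Uop Q β φ) :=
  unitary_commutation_on_canonical_domain_general Q P Dc hDc hQDc hccr hclosed
end

section
/- Let H be a complex Hilbert space, Q : H →L[ℂ] H self-adjoint (IsSelfAdjoint Q), and P : H →ₗ.[ℂ] H a symmetric, densely defined unbounded operator. Let D_c be a submodule of H contained in P.domain such that: (1) Q maps D_c into D_c; (2) Q (P φ) − P (Q φ) = Complex.I • φ for all φ ∈ D_c; (3) the graph {(φ, P φ) : φ ∈ D_c} is closed in H × H; (4) D_c is dense in H. Suppose β₀ : ℝ, β₀ ≠ 0, both β₀ and −β₀ are invariance parameters, and P has at least one eigenvalue (there exist φ₀ ∈ P.domain, φ₀ ≠ 0, and p₀ : ℝ with P φ₀ = (p₀ : ℂ) • φ₀). Then the set of real eigenvalues of P, {p : ℝ | ∃ φ ∈ P.domain, φ ≠ 0 ∧ P φ = (p : ℂ) • φ}, is neither bounded above nor bounded below. -/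
open scoped ComplexInnerProductSpace

/-- `β` is an invariance parameter: `U_β` maps `P.domain \ D_c` into itself. -/
def IsInvParam {H : Type*} [NormedAddCommGroup H] [InnerProductSpace ℂ H]
    [CompleteSpace H] (Q : H →L[ℂ] H) (P : H →ₗ.[ℂ] H) (Dc : Submodule ℂ H)
    (β : ℝ) : Prop :=
  ∀ φ : H, φ ∈ P.domain → φ ∉ Dc → Uop Q β φ ∈ P.domain ∧ Uop Q β φ ∉ Dc

/-!
Write `U_β = exp (c • Q)` with `c = -iβ`. On `D_c` the commutation relation iterates to
`P Q^(n+1) = Q^(n+1) P - (n+1) i Q^n`, so applying `P` termwise to the exponential series of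
`U_β φ` gives the series of `U_β (P φ) - β U_β φ`; since the graph of `P` on `D_c` is closed,
`U_β` preserves `D_c` and `P U_β = U_β P - β U_β` there. As `U_β† = U_{-β}`, symmetry of `P` and
density of `D_c` then show that `U_β` sends an eigenvector with eigenvalue `p` to one with
eigenvalue `p - β`, as soon as it lands in the domain of `P` (automatic on `D_c`, and the point
of an invariance parameter off `D_c`). Iterating with `β₀` and `-β₀` walks through `p₀ + ℤ β₀`.
-/

open scoped InnerProduct

theorem LinearMap.map_pow_succ_apply_of_commutator {R M N : Type*} [CommRing R]
    [AddCommGroup M] [AddCommGroup N] [Module R M] [Module R N]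
    {A ι : M →ₗ[R] N} {S : Module.End R M} {T : Module.End R N} {a : R}
    (hι : ∀ x, ι (S x) = T (ι x)) (hA : ∀ x, A (S x) = T (A x) - a • ι x) (n : ℕ) (x : M) :
    A ((S ^ (n + 1)) x) = (T ^ (n + 1)) (A x) - ((n + 1 : R) * a) • (T ^ n) (ι x) := by
  induction n generalizing x with
  | zero => simp [hA]
  | succ n ih =>
    rw [pow_succ, Module.End.mul_apply, ih, hA, hι, map_sub, map_smul]
    simp only [← Module.End.mul_apply, ← pow_succ]
    push_cast
    module

theorem exists_map_eq_of_hasSum_of_isClosed_graph {R E F ι : Type*} [Semiring R]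
    [AddCommMonoid E] [AddCommMonoid F] [Module R E] [Module R F]
    [TopologicalSpace E] [TopologicalSpace F] [ContinuousAdd E] [ContinuousAdd F]
    {D : Submodule R E} {A : D →ₗ[R] F}
    (hA : IsClosed {p : E × F | ∃ hp : p.1 ∈ D, A ⟨p.1, hp⟩ = p.2})
    {w : ι → D} {x : E} {y : F} (hx : HasSum (fun i => (w i : E)) x)
    (hy : HasSum (fun i => A (w i)) y) : ∃ h : x ∈ D, A ⟨x, h⟩ = y :=
  hA.mem_of_tendsto (hx.prodMk hy) <| .of_forall fun s => by
    rw [show ∑ i ∈ s, ((w i : E), A (w i)) = (((∑ i ∈ s, w i : D) : E), A (∑ i ∈ s, w i)) from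
      Prod.ext (by simp [Prod.fst_sum]) (by simp [Prod.snd_sum])]
    exact ⟨(∑ i ∈ s, w i).2, rfl⟩

section Exp

variable {𝕜 E : Type*} [RCLike 𝕜] [NormedAddCommGroup E] [NormedSpace 𝕜 E] [CompleteSpace E]

theorem hasSum_exp_smul_apply (c : 𝕜) (Q : E →L[𝕜] E) (x : E) :
    HasSum (fun n : ℕ => ((n.factorial : 𝕜)⁻¹ * c ^ n) • (Q ^ n) x)
      (NormedSpace.exp (c • Q) x) := by
  simpa only [ContinuousLinearMap.apply_apply, smul_pow, FunLike.coe_smul, Pi.smul_apply,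
    smul_smul] using (NormedSpace.exp_series_hasSum_exp' (𝕂 := 𝕜) (c • Q)).mapL
      (ContinuousLinearMap.apply 𝕜 E x)

theorem exists_map_exp_smul_apply_eq_of_commutator {D : Submodule 𝕜 E} {A : D →ₗ[𝕜] E}
    (hA : IsClosed {p : E × E | ∃ hp : p.1 ∈ D, A ⟨p.1, hp⟩ = p.2})
    {Q : E →L[𝕜] E} (hQD : ∀ x ∈ D, Q x ∈ D) {a : 𝕜}
    (hcomm : ∀ x : D, A ⟨Q x, hQD x x.2⟩ = Q (A x) - a • (x : E)) (c : 𝕜) (x : D) :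
    ∃ h : NormedSpace.exp (c • Q) x ∈ D,
      A ⟨NormedSpace.exp (c • Q) x, h⟩
        = NormedSpace.exp (c • Q) (A x) - (c * a) • NormedSpace.exp (c • Q) x := by
  set S : Module.End 𝕜 D := (Q : E →ₗ[𝕜] E).restrict hQD
  have hS : ∀ n (y : D), ((S ^ n) y : E) = (Q ^ n) y := by
    intro n y
    rw [Module.End.pow_restrict, LinearMap.coe_restrict_apply,
      ← ContinuousLinearMap.toLinearMap_pow, ContinuousLinearMap.coe_coe]
  have hpow := LinearMap.map_pow_succ_apply_of_commutator (A := A) (ι := D.subtype) (S := S)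
    (T := (Q : E →ₗ[𝕜] E)) (a := a) (fun _ => rfl) hcomm
  set e : ℕ → 𝕜 := fun n => (n.factorial : 𝕜)⁻¹ * c ^ n
  have he : ∀ n : ℕ, e (n + 1) * (n + 1) = c * e n := by
    intro n
    simp only [e, Nat.factorial_succ]
    push_cast
    field_simp
    ring
  let w : ℕ → D := fun n => e n • (S ^ n) x
  have hsum : HasSum (fun n => (w n : E)) (NormedSpace.exp (c • Q) x) := by
    simpa [w, hS] using hasSum_exp_smul_apply c Q x
  have htail : HasSum (fun n => e (n + 1) • (Q ^ (n + 1)) (A x))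
      (NormedSpace.exp (c • Q) (A x) - A x) := by
    simpa using (hasSum_nat_add_iff' 1).2 (hasSum_exp_smul_apply c Q (A x))
  have hAw_tail : HasSum (fun n => A (w (n + 1)))
      (NormedSpace.exp (c • Q) (A x) - A x - (c * a) • NormedSpace.exp (c • Q) x) := by
    have hterm : ∀ n, A (w (n + 1))
        = e (n + 1) • (Q ^ (n + 1)) (A x) - (c * a) • (e n • (Q ^ n) x) := by
      intro n
      simp only [w, map_smul, hpow, ← ContinuousLinearMap.toLinearMap_pow,
        ContinuousLinearMap.coe_coe, Submodule.subtype_apply, smul_sub, smul_smul]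
      rw [← mul_assoc, he, mul_right_comm]
    simp only [hterm]
    exact htail.sub ((hasSum_exp_smul_apply c Q x).const_smul (c * a))
  have hAw := HasSum.zero_add (f := fun n => A (w n)) hAw_tail
  rw [show A (w 0) = A x by simp [w, e], ← add_sub_assoc, add_sub_cancel] at hAw
  exact exists_map_eq_of_hasSum_of_isClosed_graph hA hsum hAw

end Exp

def LinearPMap.realEigenvalues {H : Type*} [NormedAddCommGroup H] [InnerProductSpace ℂ H]
    (P : H →ₗ.[ℂ] H) : Set ℝ :=
  {p | ∃ (φ : H) (hφ : φ ∈ P.domain), φ ≠ 0 ∧ P ⟨φ, hφ⟩ = (p : ℂ) • φ}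

section Hilbert

variable {H : Type*} [NormedAddCommGroup H] [InnerProductSpace ℂ H] [CompleteSpace H]

theorem adjoint_Uop {Q : H →L[ℂ] H} (hQ : IsSelfAdjoint Q) (β : ℝ) :
    (Uop Q β)† = Uop Q (-β) := by
  rw [← ContinuousLinearMap.star_eq_adjoint, Uop, NormedSpace.star_exp, star_smul, hQ.star_eq,
    Uop]
  congr 1
  simp

theorem Uop_injective (Q : H →L[ℂ] H) (β : ℝ) : Function.Injective (Uop Q β) :=
  (ContinuousLinearMap.isUnit_iff_bijective.1 <| NormedSpace.isUnit_exp_of_mem_ball (𝕂 := ℂ) <|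
    (NormedSpace.expSeries_radius_eq_top ℂ (H →L[ℂ] H)).symm ▸ edist_lt_top _ _).1

theorem LinearPMap.apply_eq_sub_smul_of_adjoint_shift {P : H →ₗ.[ℂ] H}
    (hPsymm : ∀ x y : P.domain, ⟪P x, (y : H)⟫ = ⟪(x : H), P y⟫)
    {D : Submodule ℂ H} (hD : D ≤ P.domain) (hDdense : Dense (D : Set H))
    {U : H →L[ℂ] H} {β : ℝ}
    (hU : ∀ ψ (hψ : ψ ∈ D), ∃ h : (U†) ψ ∈ D,
      P ⟨(U†) ψ, hD h⟩ = (U†) (P ⟨ψ, hD hψ⟩) + (β : ℂ) • (U†) ψ)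
    {φ : H} {hφ : φ ∈ P.domain} {p : ℝ} (heig : P ⟨φ, hφ⟩ = (p : ℂ) • φ)
    (hUφ : U φ ∈ P.domain) : P ⟨U φ, hUφ⟩ = ((p - β : ℝ) : ℂ) • U φ := by
  refine hDdense.eq_of_inner_right (𝕜 := ℂ) fun ψ hψ => ?_
  obtain ⟨hUψ, hPUψ⟩ := hU ψ hψ
  calc ⟪ψ, P ⟨U φ, hUφ⟩⟫
      = ⟪(U†) (P ⟨ψ, hD hψ⟩), φ⟫ := by
        rw [← hPsymm ⟨ψ, hD hψ⟩ ⟨U φ, hUφ⟩, ContinuousLinearMap.adjoint_inner_left]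
    _ = ⟪P ⟨(U†) ψ, hD hUψ⟩, φ⟫ - (β : ℂ) * ⟪(U†) ψ, φ⟫ := by
        rw [hPUψ, inner_add_left, inner_smul_left, Complex.conj_ofReal, add_sub_cancel_right]
    _ = ((p : ℂ) - β) * ⟪ψ, U φ⟫ := by
        rw [hPsymm ⟨(U†) ψ, hD hUψ⟩ ⟨φ, hφ⟩, heig, inner_smul_right,
          ContinuousLinearMap.adjoint_inner_left, sub_mul]
    _ = ⟪ψ, ((p - β : ℝ) : ℂ) • U φ⟫ := by
        rw [inner_smul_right]
        push_cast
        ring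

variable {Q : H →L[ℂ] H} {P : H →ₗ.[ℂ] H} {Dc : Submodule ℂ H} (hDc : Dc ≤ P.domain)

theorem exists_apply_Uop_eq_of_commutator (hQDc : ∀ φ ∈ Dc, Q φ ∈ Dc)
    (hccr : ∀ φ (hφ : φ ∈ Dc),
      Q (P ⟨φ, hDc hφ⟩) - P ⟨Q φ, hDc (hQDc φ hφ)⟩ = Complex.I • φ)
    (hclosed : IsClosed {p : H × H | ∃ hp : p.1 ∈ Dc, P ⟨p.1, hDc hp⟩ = p.2})
    (β : ℝ) {x : H} (hx : x ∈ Dc) :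
    ∃ h : Uop Q β x ∈ Dc,
      P ⟨Uop Q β x, hDc h⟩ = Uop Q β (P ⟨x, hDc hx⟩) - (β : ℂ) • Uop Q β x := by
  have hcomm (y : Dc) : P ⟨Q y, hDc (hQDc y y.2)⟩ = Q (P ⟨y, hDc y.2⟩) - Complex.I • (y : H) := by
    rw [← hccr y y.2, sub_sub_cancel]
  have key := exists_map_exp_smul_apply_eq_of_commutator
    (A := P.toFun ∘ₗ Submodule.inclusion hDc) hclosed hQDc hcomm (-(Complex.I * β)) ⟨x, hx⟩
  rwa [show -(Complex.I * β) * Complex.I = β by ring_nf; simp] at key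

theorem sub_mem_realEigenvalues_of_isInvParam (hQ : IsSelfAdjoint Q)
    (hPsymm : ∀ x y : P.domain, ⟪P x, (y : H)⟫ = ⟪(x : H), P y⟫)
    (hQDc : ∀ φ ∈ Dc, Q φ ∈ Dc)
    (hccr : ∀ φ (hφ : φ ∈ Dc),
      Q (P ⟨φ, hDc hφ⟩) - P ⟨Q φ, hDc (hQDc φ hφ)⟩ = Complex.I • φ)
    (hclosed : IsClosed {p : H × H | ∃ hp : p.1 ∈ Dc, P ⟨p.1, hDc hp⟩ = p.2})
    (hDcdense : Dense (Dc : Set H)) {β : ℝ} (hβ : IsInvParam Q P Dc β) {p : ℝ}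
    (hp : p ∈ P.realEigenvalues) : p - β ∈ P.realEigenvalues := by
  obtain ⟨φ, hφ, hφ0, heig⟩ := hp
  have hUφ : Uop Q β φ ∈ P.domain := by
    by_cases hφDc : φ ∈ Dc
    · exact hDc (exists_apply_Uop_eq_of_commutator hDc hQDc hccr hclosed β hφDc).1
    · exact (hβ φ hφ hφDc).1
  refine ⟨Uop Q β φ, hUφ, (map_ne_zero_iff _ (Uop_injective Q β)).2 hφ0, ?_⟩
  refine P.apply_eq_sub_smul_of_adjoint_shift hPsymm hDc hDcdense (fun ψ hψ => ?_) heig hUφ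
  simpa [adjoint_Uop hQ] using exists_apply_Uop_eq_of_commutator hDc hQDc hccr hclosed (-β) hψ

end Hilbert

theorem not_bddAbove_of_add_mem {S : Set ℝ} {β : ℝ} (hS : S.Nonempty) (hβ : 0 < β)
    (h : ∀ p ∈ S, p + β ∈ S) : ¬BddAbove S := by
  obtain ⟨p, hp⟩ := hS
  have hmem : ∀ n : ℕ, p + n * β ∈ S := by
    intro n
    induction n with
    | zero => simpa using hp
    | succ n ih => simpa [add_mul, add_assoc] using h _ ih
  rw [not_bddAbove_iff]
  intro M
  obtain ⟨n, hn⟩ := exists_nat_gt ((M - p) / β)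
  exact ⟨_, hmem n, by rw [div_lt_iff₀ hβ] at hn; linarith⟩

theorem not_bddAbove_and_not_bddBelow_of_add_mem_of_sub_mem {S : Set ℝ} {β : ℝ}
    (hS : S.Nonempty) (hβ : β ≠ 0) (hadd : ∀ p ∈ S, p + β ∈ S) (hsub : ∀ p ∈ S, p - β ∈ S) :
    ¬BddAbove S ∧ ¬BddBelow S := by
  wlog hpos : 0 < β generalizing β
  · exact this (neg_ne_zero.2 hβ) (by simpa [← sub_eq_add_neg] using hsub)
      (by simpa [sub_eq_add_neg] using hadd) (by grind)
  refine ⟨not_bddAbove_of_add_mem hS hpos hadd, fun hbdd => ?_⟩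
  refine not_bddAbove_of_add_mem hS.neg hpos (fun p hp => ?_) (bddAbove_neg.2 hbdd)
  simpa [neg_add_eq_sub] using hsub _ hp

theorem point_spectrum_unbounded_of_invariance_parameter_general
    {H : Type*} [NormedAddCommGroup H] [InnerProductSpace ℂ H] [CompleteSpace H]
    (Q : H →L[ℂ] H) (hQ : IsSelfAdjoint Q)
    (P : H →ₗ.[ℂ] H)
    (hPsymm : ∀ x y : P.domain, ⟪P x, (y : H)⟫ = ⟪(x : H), P y⟫)
    (Dc : Submodule ℂ H) (hDc : Dc ≤ P.domain)
    (hQDc : ∀ φ ∈ Dc, Q φ ∈ Dc)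
    (hccr : ∀ φ (hφ : φ ∈ Dc),
      Q (P ⟨φ, hDc hφ⟩) - P ⟨Q φ, hDc (hQDc φ hφ)⟩ = Complex.I • φ)
    (hclosed : IsClosed {p : H × H | ∃ hp : p.1 ∈ Dc, P ⟨p.1, hDc hp⟩ = p.2})
    (hDcdense : Dense (Dc : Set H))
    (β₀ : ℝ) (hβ₀ne : β₀ ≠ 0)
    (hβ₀ : IsInvParam Q P Dc β₀) (hβ₀' : IsInvParam Q P Dc (-β₀))
    (hpoint : ∃ (φ₀ : H) (hφ₀ : φ₀ ∈ P.domain) (p₀ : ℝ),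
      φ₀ ≠ 0 ∧ P ⟨φ₀, hφ₀⟩ = ((p₀ : ℂ)) • φ₀) :
    ¬ BddAbove {p : ℝ | ∃ (φ : H) (hφ : φ ∈ P.domain),
        φ ≠ 0 ∧ P ⟨φ, hφ⟩ = ((p : ℂ)) • φ} ∧
      ¬ BddBelow {p : ℝ | ∃ (φ : H) (hφ : φ ∈ P.domain),
        φ ≠ 0 ∧ P ⟨φ, hφ⟩ = ((p : ℂ)) • φ} := by
  obtain ⟨φ₀, hφ₀, p₀, hφ₀0, heig₀⟩ := hpoint
  have hshift : ∀ β, IsInvParam Q P Dc β → ∀ p ∈ P.realEigenvalues, p - β ∈ P.realEigenvalues :=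
    fun _ hβ _ => sub_mem_realEigenvalues_of_isInvParam hDc hQ hPsymm hQDc hccr hclosed hDcdense hβ
  exact not_bddAbove_and_not_bddBelow_of_add_mem_of_sub_mem (S := P.realEigenvalues)
    ⟨p₀, φ₀, hφ₀, hφ₀0, heig₀⟩ hβ₀ne (by simpa only [sub_neg_eq_add] using hshift _ hβ₀')
    (hshift _ hβ₀)

theorem point_spectrum_unbounded_of_invariance_parameter
    {H : Type*} [NormedAddCommGroup H] [InnerProductSpace ℂ H] [CompleteSpace H]
    (Q : H →L[ℂ] H) (hQ : IsSelfAdjoint Q)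
    (P : H →ₗ.[ℂ] H)
    (hPsymm : ∀ x y : P.domain, ⟪P x, (y : H)⟫ = ⟪(x : H), P y⟫)
    (hPdense : Dense (P.domain : Set H))
    (Dc : Submodule ℂ H) (hDc : Dc ≤ P.domain)
    (hQDc : ∀ φ ∈ Dc, Q φ ∈ Dc)
    (hccr : ∀ φ (hφ : φ ∈ Dc),
      Q (P ⟨φ, hDc hφ⟩) - P ⟨Q φ, hDc (hQDc φ hφ)⟩ = Complex.I • φ)
    (hclosed : IsClosed {p : H × H | ∃ hp : p.1 ∈ Dc, P ⟨p.1, hDc hp⟩ = p.2})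
    (hDcdense : Dense (Dc : Set H))
    (β₀ : ℝ) (hβ₀ne : β₀ ≠ 0)
    (hβ₀ : IsInvParam Q P Dc β₀) (hβ₀' : IsInvParam Q P Dc (-β₀))
    (hpoint : ∃ (φ₀ : H) (hφ₀ : φ₀ ∈ P.domain) (p₀ : ℝ),
      φ₀ ≠ 0 ∧ P ⟨φ₀, hφ₀⟩ = ((p₀ : ℂ)) • φ₀) :
    ¬ BddAbove {p : ℝ | ∃ (φ : H) (hφ : φ ∈ P.domain),
        φ ≠ 0 ∧ P ⟨φ, hφ⟩ = ((p : ℂ)) • φ} ∧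
      ¬ BddBelow {p : ℝ | ∃ (φ : H) (hφ : φ ∈ P.domain),
        φ ≠ 0 ∧ P ⟨φ, hφ⟩ = ((p : ℂ)) • φ} :=
  point_spectrum_unbounded_of_invariance_parameter_general Q hQ P hPsymm Dc hDc hQDc hccr hclosed
    hDcdense β₀ hβ₀ne hβ₀ hβ₀' hpoint
end

section
/- Let H be a complex Hilbert space, Q : H →L[ℂ] H a continuous (bounded, everywhere-defined) linear map, and P : H →ₗ.[ℂ] H an unbounded operator. Let D_a be a submodule of H with D_a ≤ P.domain such that: (1) Q maps D_a into D_a; (2) P maps D_a into D_a (for every φ ∈ D_a, P φ ∈ D_a); (3) Q (P φ) − P (Q φ) = Complex.I • φ for all φ ∈ D_a; (4) the graph of the restriction of P to D_a, {(φ, P φ) : φ ∈ D_a}, is closed in H × H; (5) every φ ∈ D_a is an analytic vector of P, i.e. there exists s > 0 such that the series ∑_n ‖Pⁿ φ‖ * sⁿ / n! is summable, where Pⁿ φ denotes the n-th iterate of P applied to φ (well defined because P maps D_a into itself). Then D_a = ⊥. (There is no nontrivial invariant domain of analytic vectors of P on which P is canonically conjugate to a bounded Q; hence the roles of Q and P in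 the commutation relation for the unitary group cannot be interchanged.) -/
/-- The `n`-th iterate of the unbounded operator `P` on an invariant subdomain `Da`. -/
noncomputable def pmapIter {H : Type*} [NormedAddCommGroup H] [InnerProductSpace ℂ H]
    (P : H →ₗ.[ℂ] H) (Da : Submodule ℂ H) (hDa : Da ≤ P.domain)
    (hP : ∀ φ : H, ∀ h : φ ∈ Da, P ⟨φ, hDa h⟩ ∈ Da) : ℕ → Da → Da
  | 0, x => x
  | n + 1, x =>
    let y := pmapIter P Da hDa hP n x
    ⟨P ⟨(y : H), hDa y.2⟩, hP (y : H) y.2⟩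

/-!
The restriction `T` of `P` to `Da` is a closed operator mapping its domain into itself. Its graph
is a Banach space, identified with `Da` via `x ↦ (x, T x)`. Transported to the graph, `T` becomes
a bounded operator `B` by the closed graph theorem, and `Q` becomes a bounded operator `A`, since
`T Q x = Q T x - i x` makes it act by `(x, y) ↦ (Q x, Q y - i x)`. Then `A B - B A = i`, which
Wielandt's argument forbids on a nonzero normed space: from `[a, b] = 1` one gets
`[a, b ^ (n + 1)] = (n + 1) b ^ n`, hence `(n + 1) ‖b ^ n‖ ≤ 2 ‖a‖ ‖b‖ ‖b ^ n‖`, so `b ^ n = 0`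
for large `n`, and descending through the same identity, `1 = b ^ 0 = 0`.
-/

section Wielandt

variable {R : Type*}

theorem mul_pow_succ_sub_pow_succ_mul [Ring R] {a b : R} (h : a * b - b * a = 1) (n : ℕ) :
    a * b ^ (n + 1) - b ^ (n + 1) * a = (n + 1) • b ^ n := by
  induction n with
  | zero => simpa using h
  | succ n ih =>
    calc a * b ^ (n + 2) - b ^ (n + 2) * a
        = (a * b - b * a) * b ^ (n + 1) + b * (a * b ^ (n + 1) - b ^ (n + 1) * a) := by
          rw [pow_succ' b (n + 1)]; noncomm_ring
      _ = (n + 2) • b ^ (n + 1) := by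
          rw [h, ih, one_mul, mul_smul_comm, ← pow_succ', succ_nsmul' _ (n + 1)]

variable [NormedRing R]

theorem succ_mul_norm_pow_le_of_mul_sub_mul_eq_one (𝕜 : Type*) [RCLike 𝕜] [NormedSpace 𝕜 R]
    {a b : R} (h : a * b - b * a = 1) (n : ℕ) :
    (n + 1) * ‖b ^ n‖ ≤ 2 * ‖a‖ * ‖b‖ * ‖b ^ n‖ := by
  have hbn : ‖b ^ (n + 1)‖ ≤ ‖b‖ * ‖b ^ n‖ := pow_succ' b n ▸ norm_mul_le _ _
  calc (n + 1) * ‖b ^ n‖ = ‖(n + 1) • b ^ n‖ := by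
        rw [RCLike.norm_nsmul 𝕜, nsmul_eq_mul]; push_cast; ring
    _ = ‖a * b ^ (n + 1) - b ^ (n + 1) * a‖ := by rw [mul_pow_succ_sub_pow_succ_mul h]
    _ ≤ ‖a‖ * ‖b ^ (n + 1)‖ + ‖b ^ (n + 1)‖ * ‖a‖ :=
        (norm_sub_le _ _).trans (add_le_add (norm_mul_le _ _) (norm_mul_le _ _))
    _ ≤ 2 * ‖a‖ * ‖b‖ * ‖b ^ n‖ := by nlinarith [norm_nonneg a]

theorem subsingleton_of_mul_sub_mul_eq_one (𝕜 : Type*) [RCLike 𝕜] [NormedSpace 𝕜 R]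
    {a b : R} (h : a * b - b * a = 1) : Subsingleton R := by
  have bound := succ_mul_norm_pow_le_of_mul_sub_mul_eq_one 𝕜 h
  obtain ⟨N, hN⟩ := exists_nat_gt (2 * ‖a‖ * ‖b‖)
  have hbN : b ^ N = 0 := by
    by_contra hne
    nlinarith [bound N, norm_pos_iff.mpr hne]
  have descend (n : ℕ) (hn : b ^ (n + 1) = 0) : b ^ n = 0 := by
    have := mul_pow_succ_sub_pow_succ_mul h n
    rw [hn, mul_zero, zero_mul, sub_zero, ← Nat.cast_smul_eq_nsmul 𝕜, eq_comm,
      smul_eq_zero] at this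
    exact this.resolve_left (Nat.cast_ne_zero.mpr n.succ_ne_zero)
  refine subsingleton_of_zero_eq_one ?_
  clear hN
  induction N with
  | zero => exact (pow_zero b ▸ hbN).symm
  | succ n ih => exact ih (descend n hbN)

theorem subsingleton_of_mul_sub_mul_eq_smul_one {𝕜 : Type*} [RCLike 𝕜] [NormedAlgebra 𝕜 R]
    {a b : R} {c : 𝕜} (hc : c ≠ 0) (h : a * b - b * a = c • 1) : Subsingleton R :=
  subsingleton_of_mul_sub_mul_eq_one 𝕜 (a := c⁻¹ • a) (b := b) <| by
    rw [smul_mul_assoc, mul_smul_comm, ← smul_sub, h, smul_smul, inv_mul_cancel₀ hc, one_smul]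

end Wielandt

namespace LinearPMap

section Graph

variable {R E F : Type*} [Ring R] [AddCommGroup E] [Module R E] [AddCommGroup F] [Module R F]

def graphEquiv (T : E →ₗ.[R] F) : T.domain ≃ₗ[R] T.graph where
  toFun x := ⟨(x, T x), T.mem_graph x⟩
  map_add' x y := Subtype.ext <| Prod.ext rfl (T.map_add x y)
  map_smul' r x := Subtype.ext <| Prod.ext rfl (T.map_smul r x)
  invFun p := ⟨(p : E × F).1, T.mem_domain_of_mem_graph (x := (p : E × F).1) p.2⟩
  left_inv _ := rfl
  right_inv p := Subtype.ext <| Prod.ext rfl <| T.mem_graph_snd_inj (T.mem_graph _) p.2 rfl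

@[simp]
theorem graphEquiv_apply (T : E →ₗ.[R] F) (x : T.domain) :
    (T.graphEquiv x : E × F) = ((x : E), T x) := rfl

end Graph

section ClosedOperator

variable {𝕜 E : Type*} [RCLike 𝕜] [NormedAddCommGroup E] [NormedSpace 𝕜 E] {T : E →ₗ.[𝕜] E}

theorem continuous_graphEquiv_conj_restrict {Q : E →L[𝕜] E}
    (hQ : ∀ x ∈ T.domain, Q x ∈ T.domain) {c : 𝕜}
    (hccr : ∀ x : T.domain, Q (T x) - T ⟨Q x, hQ x x.2⟩ = c • (x : E)) :
    Continuous (T.graphEquiv.conj (Q.toLinearMap.restrict hQ)) := by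
  have action : ∀ p : T.graph, (T.graphEquiv.conj (Q.toLinearMap.restrict hQ) p : E × E) =
      (Q (p : E × E).1, Q (p : E × E).2 - c • (p : E × E).1) := by
    refine T.graphEquiv.surjective.forall.2 fun x => ?_
    simp only [LinearEquiv.conj_apply_apply, LinearEquiv.symm_apply_apply, graphEquiv_apply,
      LinearMap.restrict_apply, ContinuousLinearMap.coe_coe, Prod.mk.injEq, true_and]
    rw [← hccr x, sub_sub_cancel]
  exact continuous_induced_rng.2 (by simp only [Function.comp_def, action]; fun_prop)

theorem continuous_graphEquiv_conj_codRestrict [CompleteSpace E] (hcl : T.IsClosed)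
    (hT : ∀ x : T.domain, T x ∈ T.domain) :
    Continuous (T.graphEquiv.conj (T.toFun.codRestrict T.domain hT)) := by
  have : CompleteSpace T.graph := completeSpace_coe_iff_isComplete.mpr hcl.isComplete
  refine LinearMap.continuous_of_isClosed_graph _ ?_
  have graph_eq : (LinearMap.graph (T.graphEquiv.conj (T.toFun.codRestrict T.domain hT)) :
      Set (T.graph × T.graph)) = {pq | (pq.1 : E × E).2 = (pq.2 : E × E).1} := by
    ext ⟨p, q⟩
    obtain ⟨x, rfl⟩ := T.graphEquiv.surjective p
    obtain ⟨y, rfl⟩ := T.graphEquiv.surjective q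
    simp only [SetLike.mem_coe, LinearMap.mem_graph_iff, LinearEquiv.conj_apply_apply,
      LinearEquiv.symm_apply_apply, T.graphEquiv.injective.eq_iff, Subtype.ext_iff,
      graphEquiv_apply, Set.mem_ofPred_eq]
    exact eq_comm
  rw [graph_eq]
  exact isClosed_eq (by fun_prop) (by fun_prop)

theorem domain_eq_bot_of_commutator_eq_smul [CompleteSpace E] (hcl : T.IsClosed)
    (hT : ∀ x : T.domain, T x ∈ T.domain) (Q : E →L[𝕜] E) (hQ : ∀ x ∈ T.domain, Q x ∈ T.domain)
    {c : 𝕜} (hc : c ≠ 0) (hccr : ∀ x : T.domain, Q (T x) - T ⟨Q x, hQ x x.2⟩ = c • (x : E)) :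
    T.domain = ⊥ := by
  set Q' := Q.toLinearMap.restrict hQ
  set T' := T.toFun.codRestrict T.domain hT
  have hccr' : Q' ∘ₗ T' - T' ∘ₗ Q' = c • LinearMap.id :=
    LinearMap.ext fun x => Subtype.ext (hccr x)
  let A : T.graph →L[𝕜] T.graph :=
    ⟨T.graphEquiv.conj Q', continuous_graphEquiv_conj_restrict hQ hccr⟩
  let B : T.graph →L[𝕜] T.graph :=
    ⟨T.graphEquiv.conj T', continuous_graphEquiv_conj_codRestrict hcl hT⟩
  have hAB : A * B - B * A = c • 1 := ContinuousLinearMap.coe_injective <| by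
    have h := congrArg T.graphEquiv.conj hccr'
    rwa [_root_.map_sub, _root_.map_smul, LinearEquiv.conj_comp, LinearEquiv.conj_comp,
      LinearEquiv.conj_id] at h
  have : Subsingleton (T.graph →L[𝕜] T.graph) := subsingleton_of_mul_sub_mul_eq_smul_one hc hAB
  have : Subsingleton T.graph := ⟨fun p q => sub_eq_zero.mp <| by
    simpa using DFunLike.congr_fun (Subsingleton.elim (1 : T.graph →L[𝕜] T.graph) 0) (p - q)⟩
  have : Subsingleton T.domain := T.graphEquiv.toEquiv.subsingleton
  exact Submodule.eq_bot_of_subsingleton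

end ClosedOperator

end LinearPMap

theorem no_nontrivial_invariant_analytic_domain_general
    {H : Type*} [NormedAddCommGroup H] [InnerProductSpace ℂ H] [CompleteSpace H]
    (Q : H →L[ℂ] H) (P : H →ₗ.[ℂ] H)
    (Da : Submodule ℂ H) (hDa : Da ≤ P.domain)
    (hQDa : ∀ φ ∈ Da, Q φ ∈ Da)
    (hPDa : ∀ φ : H, ∀ h : φ ∈ Da, P ⟨φ, hDa h⟩ ∈ Da)
    (hccr : ∀ φ (hφ : φ ∈ Da),
      Q (P ⟨φ, hDa hφ⟩) - P ⟨Q φ, hDa (hQDa φ hφ)⟩ = Complex.I • φ)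
    (hclosed : IsClosed {p : H × H | ∃ hp : p.1 ∈ Da, P ⟨p.1, hDa hp⟩ = p.2}) :
    Da = ⊥ := by
  let T : H →ₗ.[ℂ] H := ⟨Da, P.toFun ∘ₗ Submodule.inclusion hDa⟩
  have graph_eq : (T.graph : Set (H × H)) = {p | ∃ hp : p.1 ∈ Da, P ⟨p.1, hDa hp⟩ = p.2} := by
    ext ⟨x, y⟩
    simp only [SetLike.mem_coe, LinearPMap.mem_graph_iff, Set.mem_ofPred_eq]
    constructor
    · rintro ⟨⟨x, hx⟩, rfl, rfl⟩
      exact ⟨hx, rfl⟩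
    · rintro ⟨hx, hy⟩
      exact ⟨⟨x, hx⟩, rfl, hy⟩
  have hT : T.IsClosed := by rwa [LinearPMap.IsClosed, graph_eq]
  exact T.domain_eq_bot_of_commutator_eq_smul hT (fun x => hPDa x x.2) Q hQDa Complex.I_ne_zero
    fun x => hccr x x.2

theorem no_nontrivial_invariant_analytic_domain
    {H : Type*} [NormedAddCommGroup H] [InnerProductSpace ℂ H] [CompleteSpace H]
    (Q : H →L[ℂ] H) (P : H →ₗ.[ℂ] H)
    (Da : Submodule ℂ H) (hDa : Da ≤ P.domain)
    (hQDa : ∀ φ ∈ Da, Q φ ∈ Da)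
    (hPDa : ∀ φ : H, ∀ h : φ ∈ Da, P ⟨φ, hDa h⟩ ∈ Da)
    (hccr : ∀ φ (hφ : φ ∈ Da),
      Q (P ⟨φ, hDa hφ⟩) - P ⟨Q φ, hDa (hQDa φ hφ)⟩ = Complex.I • φ)
    (hclosed : IsClosed {p : H × H | ∃ hp : p.1 ∈ Da, P ⟨p.1, hDa hp⟩ = p.2})
    (hanalytic : ∀ φ : H, ∀ hφ : φ ∈ Da, ∃ s > (0 : ℝ),
      Summable fun n : ℕ =>
        ‖(pmapIter P Da hDa hPDa n ⟨φ, hφ⟩ : H)‖ * s ^ n / (n.factorial : ℝ)) :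
    Da = ⊥ :=
  no_nontrivial_invariant_analytic_domain_general Q P Da hDa hQDa hPDa hccr hclosed
end
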